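/- arXiv:2303.06936 — 4 statements merged into one kernel-verified Lean document; each statement's English description precedes it below -/
import Mathlib

section
/- Let N ∈ ℕ, let V : ℝ^{n_x} → ℝ be nonnegative with α̲(|e|) ≤ V(e) ≤ ᾱ(|e|) for all e ∈ ℝ^{n_x} (α̲, ᾱ class K∞), let constants satisfy 0 < c₂ < c₃ < c₁ and a, b > 0, let e : {1,…,N+1} → ℝ^{n_x}, η : {1,…,N+1} → [0,∞), σ ∈ {1,…,N+1}, and define U := c₁(a V(e₁) + η₁) + c₂ max{ max_{k∈{1,…,N+1}} (b V(e_k) − η_k), 0 } + c₃ max{ η_σ − η₁, 0 }. Then: (lower bound) U ≥ c₁ a α̲(|e₁|) + (c₁ − c₃) η₁ + c₂ b α̲(|e_σ|) + (c₃ − c₂) η_σ; and (upper bound) U ≤ c₁(a ᾱ(|e₁|) + η₁) + c₂ Σ_{k=1}^{N+1} (b ᾱ(|e_k|) + η_k) + c₃ (η_σ + η₁). -/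
noncomputable section

/-- `ℝ^n` with the Euclidean norm. -/
abbrev Vec (n : ℕ) : Type := EuclideanSpace ℝ (Fin n)

/-- A function of class `K∞`: continuous on `[0,∞)`, strictly increasing on `[0,∞)`,
zero at zero, and unbounded. -/
def IsClassKInf (φ : ℝ → ℝ) : Prop :=
  ContinuousOn φ (Set.Ici 0) ∧ StrictMonoOn φ (Set.Ici 0) ∧ φ 0 = 0 ∧
    Filter.Tendsto φ Filter.atTop Filter.atTop

/-- sandwich bounds for the Lyapunov function `U` of the hybrid
multi-observer: with modes indexed by `Fin (N+1)` (index `0` is the nominal mode 1),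
`U = c₁(aV(e₁)+η₁) + c₂ max{max_k (bV(e_k)−η_k), 0} + c₃ max{η_σ−η₁, 0}` satisfies
`c₁a α̲(|e₁|) + (c₁−c₃)η₁ + c₂b α̲(|e_σ|) + (c₃−c₂)η_σ ≤ U` and
`U ≤ c₁(a ᾱ(|e₁|)+η₁) + c₂ Σ_k (b ᾱ(|e_k|)+η_k) + c₃(η_σ+η₁)`. -/
theorem stmt7 {nx N : ℕ}
    (V : Vec nx → ℝ) (hV0 : ∀ e, 0 ≤ V e)
    (αlow αup : ℝ → ℝ) (hαlow : IsClassKInf αlow) (hαup : IsClassKInf αup)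
    (hsandwich : ∀ e : Vec nx, αlow ‖e‖ ≤ V e ∧ V e ≤ αup ‖e‖)
    (c₁ c₂ c₃ a b : ℝ)
    (hc₂ : 0 < c₂) (hc₂₃ : c₂ < c₃) (hc₃₁ : c₃ < c₁) (ha : 0 < a) (hb : 0 < b)
    (e : Fin (N + 1) → Vec nx) (η : Fin (N + 1) → ℝ) (hη : ∀ k, 0 ≤ η k)
    (σ : Fin (N + 1)) (U : ℝ)
    (hU : U = c₁ * (a * V (e 0) + η 0)
        + c₂ * max (Finset.univ.sup' Finset.univ_nonempty fun k => b * V (e k) - η k) 0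
        + c₃ * max (η σ - η 0) 0) :
    (c₁ * a * αlow ‖e 0‖ + (c₁ - c₃) * η 0
        + c₂ * b * αlow ‖e σ‖ + (c₃ - c₂) * η σ ≤ U) ∧
      (U ≤ c₁ * (a * αup ‖e 0‖ + η 0)
        + c₂ * ∑ k, (b * αup ‖e k‖ + η k) + c₃ * (η σ + η 0)) := by
  have hc₁ : (0:ℝ) < c₁ := lt_trans (lt_trans hc₂ hc₂₃) hc₃₁
  have hc₃ : (0:ℝ) < c₃ := lt_trans hc₂ hc₂₃
  constructor
  · -- lower bound
    have hsup : b * V (e σ) - η σ ≤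
        Finset.univ.sup' Finset.univ_nonempty fun k => b * V (e k) - η k :=
      Finset.le_sup' (fun k => b * V (e k) - η k) (Finset.mem_univ σ)
    have h1 : b * V (e σ) - η σ ≤
        max (Finset.univ.sup' Finset.univ_nonempty fun k => b * V (e k) - η k) 0 :=
      hsup.trans (le_max_left _ _)
    have h2 : η σ - η 0 ≤ max (η σ - η 0) 0 := le_max_left _ _
    have hVlow0 := (hsandwich (e 0)).1
    have hVlowσ := (hsandwich (e σ)).1
    calc c₁ * a * αlow ‖e 0‖ + (c₁ - c₃) * η 0
          + c₂ * b * αlow ‖e σ‖ + (c₃ - c₂) * η σ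
        ≤ c₁ * (a * V (e 0) + η 0) + c₂ * (b * V (e σ) - η σ) + c₃ * (η σ - η 0) := by
          nlinarith [mul_le_mul_of_nonneg_left hVlow0 (mul_pos hc₁ ha).le,
            mul_le_mul_of_nonneg_left hVlowσ (mul_pos hc₂ hb).le]
      _ ≤ U := by
          rw [hU]
          gcongr <;> linarith
  · -- upper bound
    have hsumge : ∀ k : Fin (N+1), b * V (e k) - η k ≤ ∑ j, (b * αup ‖e j‖ + η j) := by
      intro k
      have hterm : b * V (e k) - η k ≤ b * αup ‖e k‖ + η k := by
        have := (hsandwich (e k)).2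
        nlinarith [hη k]
      refine hterm.trans (Finset.single_le_sum (f := fun j => b * αup ‖e j‖ + η j) (fun j _ => ?_) (Finset.mem_univ k))
      show 0 ≤ b * αup ‖e j‖ + η j
      have h1 : 0 ≤ αup ‖e j‖ := le_trans (hV0 (e j)) ((hsandwich (e j)).2)
      nlinarith [hη j]
    have hmax : max (Finset.univ.sup' Finset.univ_nonempty fun k => b * V (e k) - η k) 0
        ≤ ∑ j, (b * αup ‖e j‖ + η j) := by
      apply max_le
      · exact Finset.sup'_le _ _ fun k _ => hsumge k
      · refine Finset.sum_nonneg fun j _ => ?_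
        have h1 : 0 ≤ αup ‖e j‖ := le_trans (hV0 (e j)) ((hsandwich (e j)).2)
        have := hη j; positivity
    have hmax2 : max (η σ - η 0) 0 ≤ η σ + η 0 := by
      have := hη σ; have := hη 0
      apply max_le <;> linarith
    have hVup0 := (hsandwich (e 0)).2
    rw [hU]
    exact add_le_add (add_le_add (by nlinarith [mul_le_mul_of_nonneg_left hVup0 (mul_pos hc₁ ha).le]) (by nlinarith [hmax])) (by nlinarith [hmax2])
end
end

section
/- Suppose Assumption 1 holds, let Λ₁ be a real symmetric positive semidefinite n_y×n_y matrix and Λ₂ a real symmetric positive semidefinite n_L×n_L matrix, let ν ∈ (0, α], let L ∈ ℝ^{n_L×n_y}, set θ_L := γ‖L − L₁‖², and let μ̲₁ ≥ 0 satisfy zᵀΛ₁z ≥ μ̲₁|z|² for all z ∈ ℝ^{n_y}. If b > 0 satisfies b θ_L ≤ μ̲₁, then for all x, e ∈ ℝ^{n_x}, η ≥ 0, u ∈ 𝒰, v ∈ 𝒱, w ∈ 𝒲, writing y = h(x,w), ŷ = h(x−e,0): b ⟨∇V(e), f_p(x,u,v) − f_o(x−e, u, L(y−ŷ))⟩ −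 g(η, L, y, ŷ) ≤ −α (b V(e) − η) + b ψ₁(|v|) + b ψ₂(|w|). -/
open RealInnerProductSpace

noncomputable section

/-- The monitoring-variable dynamics map
`g(η, L, y, ŷ) := −ν η + (y−ŷ)ᵀ(Λ₁ + LᵀΛ₂L)(y−ŷ)`. -/
def gmon {ny nL : ℕ} (ν : ℝ) (Λ₁ : Vec ny →L[ℝ] Vec ny) (Λ₂ : Vec nL →L[ℝ] Vec nL)
    (η : ℝ) (L : Vec ny →L[ℝ] Vec nL) (y yh : Vec ny) : ℝ :=
  -ν * η + ⟪Λ₁ (y - yh), y - yh⟫ + ⟪Λ₂ (L (y - yh)), L (y - yh)⟫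

/-- flow decrease of `bV(e_k)−η_k`: under Assumption 1, with `Λ₁, Λ₂ ⪰ 0`,
`ν ∈ (0,α]`, gain `L` with `θ_L := γ‖L−L₁‖²`, lower bound `μ̲₁ ≥ 0` of `zᵀΛ₁z`, and
`b > 0` with `bθ_L ≤ μ̲₁`, for all `η ≥ 0`:
`b⟨∇V(e), f_p − f_o(x−e,u,L(y−ŷ))⟩ − g(η,L,y,ŷ) ≤ −α(bV(e)−η) + bψ₁(|v|) + bψ₂(|w|)`. -/
theorem stmt9
    {nx nu nv nw ny nL : ℕ}
    (fp : Vec nx → Vec nu → Vec nv → Vec nx)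
    (fo : Vec nx → Vec nu → Vec nL → Vec nx)
    (h : Vec nx → Vec nw → Vec ny)
    (L₁ : Vec ny →L[ℝ] Vec nL)
    (𝒰 : Set (Vec nu)) (𝒱 : Set (Vec nv)) (𝒲 : Set (Vec nw))
    (h𝒰 : IsClosed 𝒰) (h𝒱 : IsClosed 𝒱) (h𝒲 : IsClosed 𝒲)
    -- Assumption 1:
    (V : Vec nx → ℝ) (hV0 : ∀ e, 0 ≤ V e) (hVC1 : ContDiff ℝ 1 V)
    (αlow αup ψ₁ ψ₂ : ℝ → ℝ)
    (hαlow : IsClassKInf αlow) (hαup : IsClassKInf αup)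
    (hψ₁ : IsClassKInf ψ₁) (hψ₂ : IsClassKInf ψ₂)
    (α γ : ℝ) (hα : 0 < α) (hγ : 0 ≤ γ)
    (hsandwich : ∀ e : Vec nx, αlow ‖e‖ ≤ V e ∧ V e ≤ αup ‖e‖)
    (hLyap : ∀ (x e : Vec nx) (d : Vec nL), ∀ u ∈ 𝒰, ∀ v ∈ 𝒱, ∀ w ∈ 𝒲,
      ⟪gradient V e, fp x u v - fo (x - e) u (L₁ (h x w - h (x - e) 0) + d)⟫
        ≤ -α * V e + ψ₁ ‖v‖ + ψ₂ ‖w‖ + γ * ‖d‖ ^ 2)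
    -- Λ₁, Λ₂ real symmetric positive semidefinite:
    (Λ₁ : Vec ny →L[ℝ] Vec ny) (Λ₂ : Vec nL →L[ℝ] Vec nL)
    (hΛ₁symm : ∀ z z' : Vec ny, ⟪Λ₁ z, z'⟫ = ⟪z, Λ₁ z'⟫)
    (hΛ₂symm : ∀ z z' : Vec nL, ⟪Λ₂ z, z'⟫ = ⟪z, Λ₂ z'⟫)
    (hΛ₁psd : ∀ z : Vec ny, 0 ≤ ⟪Λ₁ z, z⟫)
    (hΛ₂psd : ∀ z : Vec nL, 0 ≤ ⟪Λ₂ z, z⟫)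
    -- parameters:
    (ν : ℝ) (hν : 0 < ν ∧ ν ≤ α)
    (L : Vec ny →L[ℝ] Vec nL) (θL : ℝ) (hθL : θL = γ * ‖L - L₁‖ ^ 2)
    (μlow₁ : ℝ) (hμlow₁0 : 0 ≤ μlow₁)
    (hμlow₁ : ∀ z : Vec ny, μlow₁ * ‖z‖ ^ 2 ≤ ⟪Λ₁ z, z⟫)
    (b : ℝ) (hb : 0 < b) (hbθ : b * θL ≤ μlow₁) :
    ∀ (x e : Vec nx) (η : ℝ), 0 ≤ η → ∀ u ∈ 𝒰, ∀ v ∈ 𝒱, ∀ w ∈ 𝒲,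
      b * ⟪gradient V e, fp x u v - fo (x - e) u (L (h x w - h (x - e) 0))⟫
          - gmon ν Λ₁ Λ₂ η L (h x w) (h (x - e) 0)
        ≤ -α * (b * V e - η) + b * ψ₁ ‖v‖ + b * ψ₂ ‖w‖ := by
  intro x e η hη u hu v hv w hw
  set z : Vec ny := h x w - h (x - e) 0 with hz
  have hd : L z = L₁ z + (L - L₁) z := by
    simp [ContinuousLinearMap.sub_apply]
  have hL := hLyap x e ((L - L₁) z) u hu v hv w hw
  rw [← hz, ← hd] at hL
  have hnorm : ‖(L - L₁) z‖ ≤ ‖L - L₁‖ * ‖z‖ := (L - L₁).le_opNorm z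
  have hd2 : γ * ‖(L - L₁) z‖ ^ 2 ≤ θL * ‖z‖ ^ 2 := by
    rw [hθL]
    have h1 : ‖(L - L₁) z‖ ^ 2 ≤ (‖L - L₁‖ * ‖z‖) ^ 2 := by
      apply pow_le_pow_left₀ (norm_nonneg _) hnorm
    nlinarith [norm_nonneg ((L - L₁) z)]
  have hΛ₁ : b * θL * ‖z‖ ^ 2 ≤ ⟪Λ₁ z, z⟫ := by
    calc b * θL * ‖z‖ ^ 2 ≤ μlow₁ * ‖z‖ ^ 2 := by nlinarith [sq_nonneg ‖z‖]
    _ ≤ ⟪Λ₁ z, z⟫ := hμlow₁ z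
  have hΛ₂' := hΛ₂psd (L z)
  have hνη : ν * η ≤ α * η := by nlinarith [hν.1, hν.2]
  simp only [gmon, ← hz]
  nlinarith [mul_le_mul_of_nonneg_left hL hb.le, mul_le_mul_of_nonneg_left hd2 hb.le]
end
end

section
/- (Jump non-increase of the Lyapunov function, case without resets.) Let N ∈ ℕ, V : ℝ^{n_x} → [0,∞), constants 0 < c₂ < c₃ < c₁, a, b > 0, ε > 0, e : {1,…,N+1} → ℝ^{n_x}, η : {1,…,N+1} → [0,∞), and σ, σ⁺ ∈ {1,…,N+1} with σ⁺ ≠ σ. Assume η_{σ⁺} = min_{k ≠ σ} η_k and η_{σ⁺} ≤ η_σ (jump condition). Define the post-jump data by e⁺ := e, η⁺₁ := η₁, η⁺_{σ⁺} := η_{σ⁺}, and η⁺_k := η_k + ε for every k ∈ {2,…,N+1} \ {σ⁺}. Then U(e⁺, η⁺, σ⁺) ≤ U(e, η, σ), where U(e, η, σ) := c₁(a V(e₁) + η₁) + c₂ max{ max_{k∈{1,…,N+1}} (b V(e_k) − η_k), 0 } + c₃ max{ η_σ − η₁, 0 }. -/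
noncomputable section

/-- The Lyapunov function of the hybrid multi-observer, with the `N+1` modes indexed by
`Fin (N+1)` (index `0` is the nominal mode 1):
`U(e,η,σ) = c₁(aV(e₁)+η₁) + c₂ max{max_k (bV(e_k)−η_k), 0} + c₃ max{η_σ−η₁, 0}`. -/
def Ufun {nx N : ℕ} (V : Vec nx → ℝ) (c₁ c₂ c₃ a b : ℝ)
    (e : Fin (N + 1) → Vec nx) (η : Fin (N + 1) → ℝ) (σ : Fin (N + 1)) : ℝ :=
  c₁ * (a * V (e 0) + η 0)
    + c₂ * max (Finset.univ.sup' Finset.univ_nonempty fun k => b * V (e k) - η k) 0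
    + c₃ * max (η σ - η 0) 0

/-- jump non-increase of the Lyapunov function, case without resets:
at a switch from mode `σ` to mode `σ⁺ ≠ σ` achieving the minimum monitoring variable among
the modes different from `σ`, with the estimation errors unchanged, the monitoring
variables of mode 1 and of `σ⁺` unchanged, and all other monitoring variables (of modes
`k ∈ {2,…,N+1}`) increased by `ε`, the Lyapunov function `U` does not increase. -/
theorem stmt10 {nx N : ℕ}
    (V : Vec nx → ℝ) (hV0 : ∀ z, 0 ≤ V z)
    (c₁ c₂ c₃ a b ε : ℝ)
    (hc₂ : 0 < c₂) (hc₂₃ : c₂ < c₃) (hc₃₁ : c₃ < c₁) (ha : 0 < a) (hb : 0 < b)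
    (hε : 0 < ε)
    (e : Fin (N + 1) → Vec nx) (η : Fin (N + 1) → ℝ) (hη : ∀ k, 0 ≤ η k)
    (σ σp : Fin (N + 1)) (hσp : σp ≠ σ)
    (hmin : ∀ k, k ≠ σ → η σp ≤ η k)
    (hjump : η σp ≤ η σ)
    (ηp : Fin (N + 1) → ℝ)
    (hηp0 : ηp 0 = η 0) (hηpσ : ηp σp = η σp)
    (hηpk : ∀ k, k ≠ 0 → k ≠ σp → ηp k = η k + ε) :
    Ufun V c₁ c₂ c₃ a b e ηp σp ≤ Ufun V c₁ c₂ c₃ a b e η σ := by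
  have hle : ∀ k, η k ≤ ηp k := by
    intro k
    by_cases h0 : k = 0
    · subst h0; rw [hηp0]
    by_cases hs : k = σp
    · subst hs; rw [hηpσ]
    · rw [hηpk k h0 hs]; linarith
  unfold Ufun
  rw [hηp0, hηpσ]
  have h2 : (Finset.univ.sup' Finset.univ_nonempty fun k => b * V (e k) - ηp k)
      ≤ Finset.univ.sup' Finset.univ_nonempty fun k => b * V (e k) - η k := by
    apply Finset.sup'_mono_fun
    intro k _
    have := hle k
    linarith
  have h3 : max (η σp - η 0) 0 ≤ max (η σ - η 0) 0 := by
    apply max_le_max _ le_rfl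
    linarith
  have hmax2 := max_le_max h2 (le_refl (0:ℝ))
  nlinarith [mul_le_mul_of_nonneg_left hmax2 hc₂.le,
    mul_le_mul_of_nonneg_left h3 (by linarith : (0:ℝ) ≤ c₃)]
end
end

section
/- (Jump non-increase of the Lyapunov function, case with resets.) Let N ∈ ℕ, V : ℝ^{n_x} → [0,∞), constants 0 < c₂ < c₃ < c₁, a, b > 0, ε > 0, e : {1,…,N+1} → ℝ^{n_x}, η : {1,…,N+1} → [0,∞), and σ, σ⁺, k★ ∈ {1,…,N+1} with σ⁺ ≠ σ, k★ ≠ σ. Assume η_{σ⁺} = η_{k★} = min_{k ≠ σ} η_k and η_{σ⁺} ≤ η_σ (jump condition). Define the post-jump data by e⁺₁ := e₁ and e⁺_k := e_{k★} for k ∈ {2,…,N+1}; η⁺₁ := η₁, η⁺_{σ⁺} := η_{σ⁺}, and η⁺_k := η_{k★} + ε for every k ∈ {2,…,N+1} \ {σ⁺}. Then U(e⁺, η⁺, σ⁺) ≤ U(e, η, σ), where U(e, η, σ) := c₁(a V(e₁) + η₁) + c₂ max{ max_{k∈{1,…,N+1}} (b V(e_k) − η_k), 0 } + c₃ max{ η_σ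 − η₁, 0 }. -/
noncomputable section

/-- jump non-increase of the Lyapunov function, case with resets:
at a switch from mode `σ` to mode `σ⁺ ≠ σ`, where `σ⁺` and `k★ ≠ σ` achieve the minimum
monitoring variable among the modes different from `σ`, the estimation errors of modes
`k ∈ {2,…,N+1}` are reset to `e_{k★}` (mode 1 is unchanged), the monitoring variables of
mode 1 and of `σ⁺` are unchanged and all other monitoring variables of modes
`k ∈ {2,…,N+1}` are reset to `η_{k★}+ε`; then the Lyapunov function `U` does not
increase. -/
theorem stmt11 {nx N : ℕ}
    (V : Vec nx → ℝ) (hV0 : ∀ z, 0 ≤ V z)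
    (c₁ c₂ c₃ a b ε : ℝ)
    (hc₂ : 0 < c₂) (hc₂₃ : c₂ < c₃) (hc₃₁ : c₃ < c₁) (ha : 0 < a) (hb : 0 < b)
    (hε : 0 < ε)
    (e : Fin (N + 1) → Vec nx) (η : Fin (N + 1) → ℝ) (hη : ∀ k, 0 ≤ η k)
    (σ σp kstar : Fin (N + 1)) (hσp : σp ≠ σ) (hkstar : kstar ≠ σ)
    (heq : η σp = η kstar)
    (hmin : ∀ k, k ≠ σ → η σp ≤ η k)
    (hjump : η σp ≤ η σ)
    (ep : Fin (N + 1) → Vec nx)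
    (hep0 : ep 0 = e 0) (hepk : ∀ k, k ≠ 0 → ep k = e kstar)
    (ηp : Fin (N + 1) → ℝ)
    (hηp0 : ηp 0 = η 0) (hηpσ : ηp σp = η σp)
    (hηpk : ∀ k, k ≠ 0 → k ≠ σp → ηp k = η kstar + ε) :
    Ufun V c₁ c₂ c₃ a b ep ηp σp ≤ Ufun V c₁ c₂ c₃ a b e η σ := by
  have hc₂' : (0:ℝ) ≤ c₂ := hc₂.le
  have hc₃' : (0:ℝ) ≤ c₃ := (hc₂.trans hc₂₃).le
  unfold Ufun
  have hsup : (Finset.univ.sup' Finset.univ_nonempty fun k => b * V (ep k) - ηp k)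
      ≤ Finset.univ.sup' Finset.univ_nonempty fun k => b * V (e k) - η k := by
    apply Finset.sup'_le
    intro k _
    by_cases hk0 : k = 0
    · subst hk0
      rw [hep0, hηp0]
      exact Finset.le_sup' (fun k => b * V (e k) - η k) (Finset.mem_univ (0 : Fin (N+1)))
    · by_cases hkσ : k = σp
      · subst hkσ
        rw [hepk _ hk0, hηpσ, heq]
        exact Finset.le_sup' (fun k => b * V (e k) - η k) (Finset.mem_univ kstar)
      · rw [hepk _ hk0, hηpk _ hk0 hkσ]
        have h : b * V (e kstar) - (η kstar + ε) ≤ b * V (e kstar) - η kstar := by linarith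
        exact h.trans (Finset.le_sup' (fun k => b * V (e k) - η k) (Finset.mem_univ kstar))
  have h3 : max (ηp σp - ηp 0) 0 ≤ max (η σ - η 0) 0 := by
    by_cases hσp0 : σp = 0
    · subst hσp0
      simp
    · rw [hηpσ, hηp0]
      exact max_le_max (by linarith) le_rfl
  rw [hep0, hηp0] at *
  have h2 := mul_le_mul_of_nonneg_left (max_le_max hsup (le_refl (0:ℝ))) hc₂'
  have h3' := mul_le_mul_of_nonneg_left h3 hc₃'
  linarith
end
end
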